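/- arXiv:1607.07866 — 5 statements merged into one kernel-verified Lean document; each statement's English description precedes it below -/
import Mathlib

section
/- Let a_1(ε),...,a_n(ε) and b_1(ε),...,b_{n'}(ε) be positive functions of ε > 0 such that for every i, i' the limit lim_{ε↓0} a_i(ε)/b_{i'}(ε) exists in the extended interval [0,∞]. Then the limit lim_{ε↓0} (a_1(ε)+...+a_n(ε))/(b_1(ε)+...+b_{n'}(ε)) also exists in [0,∞]. -/
/-!
Pass to reciprocals: `(∑ i', b i') / a i = ∑ i', (a i / b i')⁻¹` converges in `[0,∞]`, since
inversion and addition are continuous on `ℝ≥0∞`. Inverting again, each `a i / ∑ i', b i'`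
converges, and summing over `i` gives the ratio of the sums.
-/

open Filter Topology ENNReal

section RatioLimits

variable {α ι : Type*} {l : Filter α}

theorem tendsto_ofReal_div_swap {f g : α → ℝ} {L : ℝ≥0∞}
    (hf : ∀ᶠ x in l, 0 < f x) (hg : ∀ᶠ x in l, 0 < g x)
    (h : Tendsto (fun x => ENNReal.ofReal (f x / g x)) l (𝓝 L)) :
    Tendsto (fun x => ENNReal.ofReal (g x / f x)) l (𝓝 L⁻¹) := by
  refine h.inv.congr' ?_
  filter_upwards [hf, hg] with x hfx hgx
  rw [ENNReal.ofReal_div_of_pos hgx, ENNReal.ofReal_div_of_pos hfx,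
    ENNReal.inv_div (Or.inl ofReal_ne_top) (Or.inl (ENNReal.ofReal_pos.mpr hgx).ne')]

theorem tendsto_ofReal_sum_div {s : Finset ι} {f : ι → α → ℝ} {g : α → ℝ} {L : ι → ℝ≥0∞}
    (hf : ∀ᶠ x in l, ∀ i ∈ s, 0 ≤ f i x) (hg : ∀ᶠ x in l, 0 ≤ g x)
    (h : ∀ i ∈ s, Tendsto (fun x => ENNReal.ofReal (f i x / g x)) l (𝓝 (L i))) :
    Tendsto (fun x => ENNReal.ofReal ((∑ i ∈ s, f i x) / g x)) l (𝓝 (∑ i ∈ s, L i)) := by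
  refine (tendsto_finsetSum s h).congr' ?_
  filter_upwards [hf, hg] with x hfx hgx
  rw [Finset.sum_div, ENNReal.ofReal_sum_of_nonneg fun i hi => div_nonneg (hfx i hi) hgx]

theorem tendsto_ofReal_div_sum {s : Finset ι} (hs : s.Nonempty) {f : α → ℝ} {g : ι → α → ℝ}
    {L : ι → ℝ≥0∞} (hf : ∀ᶠ x in l, 0 < f x) (hg : ∀ᶠ x in l, ∀ i ∈ s, 0 < g i x)
    (h : ∀ i ∈ s, Tendsto (fun x => ENNReal.ofReal (f x / g i x)) l (𝓝 (L i))) :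
    Tendsto (fun x => ENNReal.ofReal (f x / ∑ i ∈ s, g i x)) l (𝓝 (∑ i ∈ s, (L i)⁻¹)⁻¹) := by
  have hsum_pos : ∀ᶠ x in l, 0 < ∑ i ∈ s, g i x := by
    filter_upwards [hg] with x hgx using Finset.sum_pos hgx hs
  have hswap : Tendsto (fun x => ENNReal.ofReal ((∑ i ∈ s, g i x) / f x)) l
      (𝓝 (∑ i ∈ s, (L i)⁻¹)) := by
    refine tendsto_ofReal_sum_div ?_ (hf.mono fun x hx => hx.le) fun i hi =>
      tendsto_ofReal_div_swap hf (hg.mono fun x hx => hx i hi) (h i hi)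
    filter_upwards [hg] with x hgx i hi using (hgx i hi).le
  simpa only [inv_inv] using tendsto_ofReal_div_swap hsum_pos hf hswap

end RatioLimits

theorem stmt0_general (n n' : ℕ) (hn' : 0 < n')
    (a : Fin n → ℝ → ℝ) (b : Fin n' → ℝ → ℝ)
    (ha : ∀ i, ∀ ε > (0:ℝ), 0 < a i ε) (hb : ∀ i', ∀ ε > (0:ℝ), 0 < b i' ε)
    (hlim : ∀ i i', ∃ L : ENNReal,
      Tendsto (fun ε => ENNReal.ofReal (a i ε / b i' ε)) (𝓝[>] (0:ℝ)) (𝓝 L)) :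
    ∃ L : ENNReal,
      Tendsto (fun ε => ENNReal.ofReal ((∑ i, a i ε) / (∑ i', b i' ε)))
        (𝓝[>] (0:ℝ)) (𝓝 L) := by
  choose L hL using hlim
  have hpos : ∀ᶠ ε in 𝓝[>] (0:ℝ), 0 < ε := eventually_mem_nhdsWithin
  have ha' : ∀ i, ∀ᶠ ε in 𝓝[>] (0:ℝ), 0 < a i ε := fun i => hpos.mono (ha i)
  have hb' : ∀ᶠ ε in 𝓝[>] (0:ℝ), ∀ i' ∈ Finset.univ, 0 < b i' ε :=
    hpos.mono fun ε hε i' _ => hb i' ε hε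
  have hb_nonempty : (Finset.univ : Finset (Fin n')).Nonempty := ⟨⟨0, hn'⟩, Finset.mem_univ _⟩
  exact ⟨_, tendsto_ofReal_sum_div
    (hpos.mono fun ε hε i _ => (ha i ε hε).le)
    (hb'.mono fun ε hε => (Finset.sum_pos hε hb_nonempty).le)
    fun i _ => tendsto_ofReal_div_sum hb_nonempty (ha' i) hb' fun i' _ => hL i i'⟩

/-- Lemma on sums of positive functions: if all ratios `a i / b i'` converge in `[0,∞]`
as `ε ↓ 0`, then so does the ratio of the sums. -/
theorem stmt0 (n n' : ℕ) (hn : 0 < n) (hn' : 0 < n')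
    (a : Fin n → ℝ → ℝ) (b : Fin n' → ℝ → ℝ)
    (ha : ∀ i, ∀ ε > (0:ℝ), 0 < a i ε) (hb : ∀ i', ∀ ε > (0:ℝ), 0 < b i' ε)
    (hlim : ∀ i i', ∃ L : ENNReal,
      Tendsto (fun ε => ENNReal.ofReal (a i ε / b i' ε)) (𝓝[>] (0:ℝ)) (𝓝 L)) :
    ∃ L : ENNReal,
      Tendsto (fun ε => ENNReal.ofReal ((∑ i, a i ε) / (∑ i', b i' ε)))
        (𝓝[>] (0:ℝ)) (𝓝 L) :=
  stmt0_general n n' hn' a b ha hb hlim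
end

section
/- Let X^ε be an asymptotically regular family of continuous-time Markov chains on finite S (N ≥ 2) whose skeleton chain Z (with transition probabilities P_{ij} = lim_{ε↓0} q_{ij}(ε)/∑_{j'≠i} q_{ij'}(ε), P_{ii} = 0) is irreducible with stationary distribution λ. Let T(i,ε) = (∑_{j≠i} q_{ij}(ε))^{-1} and T̄(ε) = ∑_{i'} λ(i') T(i',ε). Then the stationary distribution μ(i,ε) of X^ε satisfies μ(i,ε) / (λ(i) T(i,ε)/T̄(ε)) → 1 as ε ↓ 0, for every i ∈ S. -/
/-!
Reweighting `μ(·,ε)` by the exit rates `1 / T(·,ε)` gives a stationary distribution `ν(·,ε)` of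
the jump chain at level `ε`, whose transition matrix tends to `P`. By compactness of the simplex
and uniqueness of the stationary distribution of the irreducible `P`, `ν(·,ε) → λ`. Undoing the
reweighting, `μ(i,ε) = ν(i,ε) T(i,ε) / ∑ ν T`, and since `ν / λ → 1` uniformly on the finite state
space, the normalizing sums `∑ ν T` and `∑ λ T` are asymptotically equal.
-/

open Filter Topology Finset

namespace Matrix

variable {ι : Type*} [Fintype ι] [DecidableEq ι]

lemma vecMul_pow_eq_self {R : Type*} [Semiring R] {P : Matrix ι ι R} {v : ι → R} (hv : v ᵥ* P = v)
    (n : ℕ) : v ᵥ* P ^ n = v := by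
  induction n with
  | zero => exact vecMul_one v
  | succ n ih => rw [pow_succ, ← vecMul_vecMul, ih, hv]

section LinearOrderedField

variable {R : Type*} [Field R] [LinearOrder R] [IsStrictOrderedRing R] {P : Matrix ι ι R}

lemma eq_zero_of_vecMul_eq_self_of_apply_eq_zero (hP : ∀ i j, 0 ≤ P i j)
    (hirr : ∀ i j, ∃ n : ℕ, 0 < (P ^ n) i j) {h : ι → R} (hh : ∀ i, 0 ≤ h i)
    (hstat : h ᵥ* P = h) {i₀ : ι} (hi₀ : h i₀ = 0) : h = 0 := by
  funext i
  obtain ⟨n, hn⟩ := hirr i i₀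
  have hsum : ∑ k, h k * (P ^ n) k i₀ = 0 := hi₀ ▸ congrFun (vecMul_pow_eq_self hstat n) i₀
  have hterm := (sum_eq_zero_iff_of_nonneg fun k _ =>
    mul_nonneg (hh k) (pow_apply_nonneg hP n k i₀)).1 hsum i (mem_univ i)
  exact (mul_eq_zero.1 hterm).resolve_right hn.ne'

lemma pos_of_vecMul_eq_self (hP : ∀ i j, 0 ≤ P i j) (hirr : ∀ i j, ∃ n : ℕ, 0 < (P ^ n) i j)
    {p : ι → R} (hp : p ∈ stdSimplex R ι) (hstat : p ᵥ* P = p) (i : ι) : 0 < p i := by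
  refine (hp.1 i).lt_of_ne' fun hi => ?_
  have h0 := eq_zero_of_vecMul_eq_self_of_apply_eq_zero hP hirr hp.1 hstat hi
  simpa [h0] using hp.2

/-- Subtract from `v` the largest multiple `c • p` that keeps it nonnegative: the difference is a
nonnegative stationary vector vanishing somewhere, hence zero. -/
lemma eq_of_vecMul_eq_self (hP : ∀ i j, 0 ≤ P i j) (hirr : ∀ i j, ∃ n : ℕ, 0 < (P ^ n) i j)
    {p : ι → R} (hp : p ∈ stdSimplex R ι) (hpstat : p ᵥ* P = p)
    {v : ι → R} (hv : ∑ i, v i = 1) (hvstat : v ᵥ* P = v) : v = p := by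
  have hpos := pos_of_vecMul_eq_self hP hirr hp hpstat
  have : Nonempty ι := univ_nonempty_iff.1 (nonempty_of_sum_ne_zero (hp.2 ▸ one_ne_zero))
  obtain ⟨i₀, hi₀⟩ := Finite.exists_min fun i => v i / p i
  set c := v i₀ / p i₀
  have hdiff : v - c • p = 0 := by
    refine eq_zero_of_vecMul_eq_self_of_apply_eq_zero hP hirr (fun i => ?_) ?_ (i₀ := i₀) ?_
    · simpa using (le_div_iff₀ (hpos i)).1 (hi₀ i)
    · rw [sub_vecMul, smul_vecMul, hvstat, hpstat]
    · simp [c, div_mul_cancel₀ _ (hpos i₀).ne']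
  have hc : c = 1 := by
    have := congrArg (fun u => ∑ i, u i) hdiff
    simp only [Pi.sub_apply, Pi.smul_apply, smul_eq_mul, sum_sub_distrib, ← mul_sum, hv, hp.2,
      mul_one, Pi.zero_apply, sum_const_zero] at this
    exact (sub_eq_zero.1 this).symm
  rw [sub_eq_zero, hc, one_smul] at hdiff
  exact hdiff

end LinearOrderedField

variable {α : Type*} {l : Filter α}

/-- Every cluster point of `ν` is a stationary distribution of `P`, hence equals `p`. -/
lemma tendsto_of_vecMul_eq_self {P : Matrix ι ι ℝ} (hP : ∀ i j, 0 ≤ P i j)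
    (hirr : ∀ i j, ∃ n : ℕ, 0 < (P ^ n) i j) {p : ι → ℝ} (hp : p ∈ stdSimplex ℝ ι)
    (hpstat : p ᵥ* P = p) {J : α → Matrix ι ι ℝ} (hJ : Tendsto J l (𝓝 P)) {ν : α → ι → ℝ}
    (hν : ∀ᶠ a in l, ν a ∈ stdSimplex ℝ ι) (hνstat : ∀ᶠ a in l, ν a ᵥ* J a = ν a) :
    Tendsto ν l (𝓝 p) := by
  refine (isCompact_stdSimplex ℝ ι).tendsto_nhds_of_unique_mapClusterPt hν fun x hx hclus => ?_
  refine eq_of_vecMul_eq_self hP hirr hp hpstat hx.2 ?_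
  set G := l ⊓ comap ν (𝓝 x)
  have : G.NeBot := by
    rw [MapClusterPt, ClusterPt, ← Filter.push_pull', map_neBot_iff, inf_comm] at hclus
    exact hclus
  have hGx : Tendsto ν G (𝓝 x) := tendsto_comap.mono_left inf_le_right
  have hlim : Tendsto (fun a => ν a ᵥ* J a) G (𝓝 (x ᵥ* P)) :=
    ((continuous_fst.matrix_vecMul continuous_snd).tendsto (x, P)).comp
      (hGx.prodMk_nhds (hJ.mono_left inf_le_left))
  exact tendsto_nhds_unique (hlim.congr' (hνstat.filter_mono inf_le_left)) hGx

end Matrix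

lemma tendsto_sum_mul_div_sum {α ι : Type*} [Fintype ι] {l : Filter α} {w f : α → ι → ℝ}
    (hw : ∀ᶠ a in l, ∀ k, 0 ≤ w a k) (hw₀ : ∀ᶠ a in l, 0 < ∑ k, w a k) {c : ℝ}
    (hf : ∀ k, Tendsto (f · k) l (𝓝 c)) :
    Tendsto (fun a => (∑ k, w a k * f a k) / ∑ k, w a k) l (𝓝 c) := by
  rw [tendsto_iff_norm_sub_tendsto_zero]
  have hlim : Tendsto (fun a => ∑ k, ‖f a k - c‖) l (𝓝 0) := by
    simpa using tendsto_finsetSum univ fun k _ => tendsto_iff_norm_sub_tendsto_zero.1 (hf k)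
  refine squeeze_zero' (Eventually.of_forall fun a => norm_nonneg _) ?_ hlim
  filter_upwards [hw, hw₀] with a hwa hWa
  set W := ∑ k, w a k
  have hle : ∀ k, ‖w a k / W‖ ≤ 1 := fun k => by
    rw [Real.norm_of_nonneg (div_nonneg (hwa k) hWa.le), div_le_one hWa]
    exact single_le_sum (fun k _ => hwa k) (mem_univ k)
  calc ‖(∑ k, w a k * f a k) / W - c‖ = ‖∑ k, w a k / W * (f a k - c)‖ := by
        simp only [div_mul_eq_mul_div, ← sum_div, mul_sub, sum_sub_distrib, ← sum_mul]
        rw [mul_div_cancel_left₀ _ hWa.ne']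
    _ ≤ ∑ k, ‖w a k / W * (f a k - c)‖ := norm_sum_le _ _
    _ ≤ ∑ k, ‖f a k - c‖ := sum_le_sum fun k _ => by
        rw [norm_mul]; exact mul_le_of_le_one_left (norm_nonneg _) (hle k)

section Reweight

variable {ι : Type*} [Fintype ι]

noncomputable def reweight (v w : ι → ℝ) (i : ι) : ℝ := v i * w i / ∑ k, v k * w k

lemma sum_mul_pos_of_mem_stdSimplex {v w : ι → ℝ} (hv : v ∈ stdSimplex ℝ ι)
    (hw : ∀ k, 0 < w k) : 0 < ∑ k, v k * w k := by
  obtain ⟨k, -, hk⟩ := (sum_pos_iff_of_nonneg fun k _ => hv.1 k).1 (hv.2 ▸ one_pos)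
  exact sum_pos' (fun k _ => mul_nonneg (hv.1 k) (hw k).le) ⟨k, mem_univ k, mul_pos hk (hw k)⟩

lemma reweight_mem_stdSimplex {v w : ι → ℝ} (hv : v ∈ stdSimplex ℝ ι) (hw : ∀ k, 0 < w k) :
    reweight v w ∈ stdSimplex ℝ ι :=
  ⟨fun i => div_nonneg (mul_nonneg (hv.1 i) (hw i).le) (sum_mul_pos_of_mem_stdSimplex hv hw).le,
    by simp only [reweight, ← sum_div, div_self (sum_mul_pos_of_mem_stdSimplex hv hw).ne']⟩

lemma reweight_reweight_inv {v w : ι → ℝ} (hv : v ∈ stdSimplex ℝ ι) (hw : ∀ k, 0 < w k) :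
    reweight (reweight v w) w⁻¹ = v := by
  have hS := (sum_mul_pos_of_mem_stdSimplex hv hw).ne'
  have hcancel : ∀ k, reweight v w k * w⁻¹ k = v k / ∑ k, v k * w k := fun k => by
    rw [reweight, Pi.inv_apply, mul_div_right_comm, mul_inv_cancel_right₀ (hw k).ne']
  funext i
  rw [reweight, hcancel, Fintype.sum_congr _ _ hcancel, ← sum_div, hv.2,
    div_div_div_cancel_right₀ hS, div_one]

variable {α : Type*} {l : Filter α}

/-- The ratio is `ν i / p i` divided by the `p T`-weighted average of `ν / p`. -/
lemma tendsto_reweight_div_reweight {p : ι → ℝ} (hp : ∀ k, 0 < p k) {ν : α → ι → ℝ}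
    (hν : ∀ k, Tendsto (ν · k) l (𝓝 (p k))) {T : α → ι → ℝ} (hT : ∀ᶠ a in l, ∀ k, 0 < T a k)
    (i : ι) : Tendsto (fun a => reweight (ν a) (T a) i / reweight p (T a) i) l (𝓝 1) := by
  have hratio : ∀ k, Tendsto (fun a => ν a k / p k) l (𝓝 1) := fun k => by
    simpa [(hp k).ne'] using (hν k).div_const (p k)
  have havg := tendsto_sum_mul_div_sum (w := fun a k => p k * T a k)
    (hT.mono fun a ha k => (mul_pos (hp k) (ha k)).le)
    (hT.mono fun a ha => sum_pos (fun k _ => mul_pos (hp k) (ha k)) ⟨i, mem_univ i⟩) hratio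
  rw [← div_one 1]
  refine ((hratio i).div havg one_ne_zero).congr' (hT.mono fun a ha => ?_)
  have hsum : ∑ k, p k * T a k * (ν a k / p k) = ∑ k, ν a k * T a k :=
    Fintype.sum_congr _ _ fun k => by field_simp [(hp k).ne']
  simp only [Pi.div_apply, hsum, reweight]
  field_simp [(hp i).ne', (ha i).ne']

end Reweight

open Matrix

section JumpChain

variable {ι : Type*} [Fintype ι] [DecidableEq ι]

def exitRate (q : ι → ι → ℝ) (i : ι) : ℝ := ∑ j ∈ univ.erase i, q i j

noncomputable def jumpMatrix (q : ι → ι → ℝ) : Matrix ι ι ℝ :=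
  fun i j => if i = j then 0 else q i j / exitRate q i

lemma exitRate_pos [Nontrivial ι] {q : ι → ι → ℝ} (hq : ∀ i j, i ≠ j → 0 < q i j) (i : ι) :
    0 < exitRate q i := by
  obtain ⟨j, hj⟩ := exists_ne i
  exact sum_pos (fun k hk => hq i k (ne_of_mem_erase hk).symm) ⟨j, mem_erase.2 ⟨hj, mem_univ j⟩⟩

lemma jumpMatrix_nonneg {q : ι → ι → ℝ} (hq : ∀ i j, i ≠ j → 0 ≤ q i j) (i j : ι) :
    0 ≤ jumpMatrix q i j := by
  unfold jumpMatrix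
  split_ifs with hij
  exacts [le_rfl,
    div_nonneg (hq i j hij) (sum_nonneg fun k hk => hq i k (ne_of_mem_erase hk).symm)]

lemma reweight_exitRate_vecMul_jumpMatrix {q : ι → ι → ℝ} (hQ : ∀ i, exitRate q i ≠ 0)
    {μ : ι → ℝ} (hbal : ∀ j, ∑ i ∈ univ.erase j, μ i * q i j = μ j * exitRate q j) :
    reweight μ (exitRate q) ᵥ* jumpMatrix q = reweight μ (exitRate q) := by
  funext j
  simp only [Matrix.vecMul, dotProduct, jumpMatrix]
  rw [← sum_erase_add _ _ (mem_univ j), if_pos rfl, mul_zero, add_zero,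
    sum_congr rfl fun i hi => by rw [if_neg (ne_of_mem_erase hi)]]
  have hterm : ∀ i, reweight μ (exitRate q) i * (q i j / exitRate q i)
      = μ i * q i j / ∑ k, μ k * exitRate q k := fun i => by
    rw [reweight]; field_simp [hQ i]
  rw [sum_congr rfl fun i _ => hterm i, ← sum_div, hbal, reweight]

variable {α : Type*} {l : Filter α}

lemma tendsto_jumpMatrix {q : α → ι → ι → ℝ} {P : Matrix ι ι ℝ} (hPdiag : ∀ i, P i i = 0)
    (hP : ∀ i j, i ≠ j → Tendsto (fun a => q a i j / exitRate (q a) i) l (𝓝 (P i j))) :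
    Tendsto (fun a => jumpMatrix (q a)) l (𝓝 P) := by
  refine tendsto_pi_nhds.2 fun i => tendsto_pi_nhds.2 fun j => ?_
  by_cases hij : i = j
  · subst hij
    simpa [jumpMatrix, hPdiag] using tendsto_const_nhds
  · simpa [jumpMatrix, hij] using hP i j hij

end JumpChain

theorem stmt7_general (N : ℕ) (hN : 2 ≤ N) (q : ℝ → Fin N → Fin N → ℝ)
    (hpos : ∀ ε > (0:ℝ), ∀ i j, i ≠ j → 0 < q ε i j)
    (P : Matrix (Fin N) (Fin N) ℝ) (hPdiag : ∀ i, P i i = 0)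
    (hP : ∀ i j : Fin N, i ≠ j → Tendsto
      (fun ε => q ε i j / ∑ j' ∈ Finset.univ.erase i, q ε i j')
      (𝓝[>] (0:ℝ)) (𝓝 (P i j)))
    (hirr : ∀ i j : Fin N, ∃ n : ℕ, 0 < (P ^ n) i j)
    (lam : Fin N → ℝ)
    (hlamnn : ∀ i, 0 ≤ lam i) (hlam1 : ∑ i, lam i = 1)
    (hlamstat : ∀ j, ∑ i, lam i * P i j = lam j)
    (μ : ℝ → Fin N → ℝ)
    (hμ : ∀ ε > (0:ℝ), (∀ i, 0 ≤ μ ε i) ∧ (∑ i, μ ε i = 1) ∧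
      ∀ j, ∑ i ∈ Finset.univ.erase j, μ ε i * q ε i j
        = μ ε j * ∑ k ∈ Finset.univ.erase j, q ε j k) :
    ∀ i, Tendsto (fun ε =>
        μ ε i / (lam i * (∑ j ∈ Finset.univ.erase i, q ε i j)⁻¹
          / ∑ i', lam i' * (∑ j ∈ Finset.univ.erase i', q ε i' j)⁻¹))
      (𝓝[>] (0:ℝ)) (𝓝 1) := by
  intro i
  have : Nontrivial (Fin N) := Fin.nontrivial_iff_two_le.2 hN
  have hε : ∀ᶠ ε in 𝓝[>] (0:ℝ), 0 < ε := self_mem_nhdsWithin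
  have hQ : ∀ᶠ ε in 𝓝[>] (0:ℝ), ∀ k, 0 < exitRate (q ε) k :=
    hε.mono fun ε hε => exitRate_pos (hpos ε hε)
  have hμ' : ∀ᶠ ε in 𝓝[>] (0:ℝ), μ ε ∈ stdSimplex ℝ (Fin N) :=
    hε.mono fun ε hε => ⟨(hμ ε hε).1, (hμ ε hε).2.1⟩
  have hlam : lam ∈ stdSimplex ℝ (Fin N) := ⟨hlamnn, hlam1⟩
  have hJ := tendsto_jumpMatrix hPdiag hP
  have hPnn : ∀ i j, 0 ≤ P i j := fun i j =>
    ge_of_tendsto (tendsto_pi_nhds.1 (tendsto_pi_nhds.1 hJ i) j) <|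
      hε.mono fun ε hε => jumpMatrix_nonneg (fun i j hij => (hpos ε hε i j hij).le) i j
  have hν : Tendsto (fun ε => reweight (μ ε) (exitRate (q ε))) (𝓝[>] 0) (𝓝 lam) :=
    tendsto_of_vecMul_eq_self hPnn hirr hlam (funext hlamstat) hJ
      ((hμ'.and hQ).mono fun ε h => reweight_mem_stdSimplex h.1 h.2)
      ((hε.and hQ).mono fun ε h =>
        reweight_exitRate_vecMul_jumpMatrix (fun k => (h.2 k).ne') (hμ ε h.1).2.2)
  refine (tendsto_reweight_div_reweight (pos_of_vecMul_eq_self hPnn hirr hlam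
    (funext hlamstat)) (tendsto_pi_nhds.1 hν) (T := fun ε => (exitRate (q ε))⁻¹)
    (hQ.mono fun ε h k => inv_pos.2 (h k)) i).congr' ?_
  filter_upwards [hμ', hQ] with ε hμε hQε
  rw [reweight_reweight_inv hμε hQε]
  rfl

/-- For an asymptotically regular family of continuous-time Markov chains whose skeleton
chain `P` is irreducible with stationary distribution `λ`, the stationary distribution
`μ(·,ε)` of `X^ε` satisfies `μ(i,ε) ~ λ(i) T(i,ε)/T̄(ε)` as `ε ↓ 0`, where
`T(i,ε) = (∑_{j≠i} q_{ij}(ε))⁻¹` and `T̄(ε) = ∑_{i'} λ(i') T(i',ε)`. -/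
theorem stmt7 (N : ℕ) (hN : 2 ≤ N) (q : ℝ → Fin N → Fin N → ℝ)
    (hpos : ∀ ε > (0:ℝ), ∀ i j, i ≠ j → 0 < q ε i j)
    (hAR : ∀ i j k l : Fin N, i ≠ j → k ≠ l → ∃ L : ENNReal,
      Tendsto (fun ε => ENNReal.ofReal (q ε i j / q ε k l)) (𝓝[>] (0:ℝ)) (𝓝 L))
    (P : Matrix (Fin N) (Fin N) ℝ) (hPdiag : ∀ i, P i i = 0)
    (hP : ∀ i j : Fin N, i ≠ j → Tendsto
      (fun ε => q ε i j / ∑ j' ∈ Finset.univ.erase i, q ε i j')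
      (𝓝[>] (0:ℝ)) (𝓝 (P i j)))
    (hirr : ∀ i j : Fin N, ∃ n : ℕ, 0 < (P ^ n) i j)
    (lam : Fin N → ℝ)
    (hlamnn : ∀ i, 0 ≤ lam i) (hlam1 : ∑ i, lam i = 1)
    (hlamstat : ∀ j, ∑ i, lam i * P i j = lam j)
    (μ : ℝ → Fin N → ℝ)
    (hμ : ∀ ε > (0:ℝ), (∀ i, 0 ≤ μ ε i) ∧ (∑ i, μ ε i = 1) ∧
      ∀ j, ∑ i ∈ Finset.univ.erase j, μ ε i * q ε i j
        = μ ε j * ∑ k ∈ Finset.univ.erase j, q ε j k) :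
    ∀ i, Tendsto (fun ε =>
        μ ε i / (lam i * (∑ j ∈ Finset.univ.erase i, q ε i j)⁻¹
          / ∑ i', lam i' * (∑ j ∈ Finset.univ.erase i', q ε i' j)⁻¹))
      (𝓝[>] (0:ℝ)) (𝓝 1) :=
  stmt7_general N hN q hpos P hPdiag hP hirr lam hlamnn hlam1 hlamstat μ hμ
end

section
/- Let Z^ε be a family of discrete-time Markov chains on finite S converging entrywise (in transition probabilities on off-diagonal entries) to a chain Z, let E ⊆ S be nonempty such that from every state of S the set E is reachable under Z, and let τ^ε = min{n : Z^ε_n ∈ E}, τ = min{n : Z_n ∈ E}. Then for each i ∈ S and j ∈ E, P_i(Z^ε_{τ^ε} = j) → P_i(Z_τ = j) as ε ↓ 0. -/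
/-!
Off `E` the hitting vector solves `(1 - Q) x = b`, where `Q = restrictCompl P E` is `P` with
the rows and columns of `E` deleted and `b k = P k j`. Since `E` is reachable under `P`, the
maximum principle forces every `P`-harmonic function vanishing on `E` to vanish identically,
so `1 - Q` is invertible. Convergence of the off-diagonal entries, together with the row sums,
gives convergence of all entries. Matrix inversion is continuous at invertible matrices, so
the solutions `(1 - Q^ε)⁻¹ b^ε` converge to `(1 - Q)⁻¹ b`.
-/

open Filter Topology Finset

/-- `HittingDistribution P E j h`: `h k = P_k(Z_τ = j)` where `τ` is the first hitting
time of `E` by the chain with transition matrix `P`. The hitting probabilities are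
characterized as the minimal nonnegative solution of the standard linear system. -/
def HittingDistribution {N : ℕ} (P : Matrix (Fin N) (Fin N) ℝ) (E : Finset (Fin N))
    (j : Fin N) (h : Fin N → ℝ) : Prop :=
  (∀ k, 0 ≤ h k) ∧ (∀ k ∈ E, h k = if k = j then 1 else 0) ∧
  (∀ k ∉ E, h k = ∑ m, P k m * h m) ∧
  ∀ g : Fin N → ℝ, (∀ k, 0 ≤ g k) → (∀ k ∈ E, g k = if k = j then 1 else 0) →
    (∀ k ∉ E, g k = ∑ m, P k m * g m) → ∀ k, h k ≤ g k

open Matrix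

variable {ι : Type*}

def restrictCompl (P : Matrix ι ι ℝ) (E : Finset ι) :
    Matrix {k // k ∉ E} {k // k ∉ E} ℝ :=
  P.submatrix Subtype.val Subtype.val

theorem continuous_one_sub_restrictCompl [DecidableEq ι] (E : Finset ι) :
    Continuous fun M : Matrix ι ι ℝ => 1 - restrictCompl M E :=
  continuous_const.sub (continuous_id.matrix_submatrix _ _)

variable [Fintype ι]

theorem abs_eq_of_harmonicAt_of_forall_abs_le {P : Matrix ι ι ℝ} (hP : ∀ i j, 0 ≤ P i j)
    (hrow : ∀ i, ∑ j, P i j = 1) {y : ι → ℝ} {a b : ι}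
    (ha : y a = ∑ m, P a m * y m) (hmax : ∀ m, |y m| ≤ |y a|) (hab : 0 < P a b) :
    |y b| = |y a| := by
  have hle : |y a| ≤ ∑ m, P a m * |y m| :=
    calc |y a| = |∑ m, P a m * y m| := by rw [← ha]
      _ ≤ ∑ m, |P a m * y m| := abs_sum_le_sum_abs _ _
      _ = ∑ m, P a m * |y m| := by simp_rw [abs_mul, abs_of_nonneg (hP a _)]
  have hdefect_nonneg : ∀ m ∈ univ, 0 ≤ P a m * (|y a| - |y m|) :=
    fun m _ => mul_nonneg (hP a m) (sub_nonneg.mpr (hmax m))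
  have hdefect : ∑ m, P a m * (|y a| - |y m|) = 0 := by
    refine le_antisymm ?_ (sum_nonneg hdefect_nonneg)
    simp only [mul_sub, sum_sub_distrib, ← sum_mul, hrow a, one_mul]
    linarith
  have hdefect_b := (sum_eq_zero_iff_of_nonneg hdefect_nonneg).mp hdefect b (mem_univ b)
  linarith [(mul_eq_zero.mp hdefect_b).resolve_left hab.ne']

theorem eq_zero_of_harmonic_off {P : Matrix ι ι ℝ} (hP : ∀ i j, 0 ≤ P i j)
    (hrow : ∀ i, ∑ j, P i j = 1) {E : Finset ι}
    (hreach : ∀ i, ∃ e ∈ E, Relation.ReflTransGen (fun x y => 0 < P x y) i e)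
    {y : ι → ℝ} (hyE : ∀ k ∈ E, y k = 0) (hyF : ∀ k ∉ E, y k = ∑ m, P k m * y m) :
    y = 0 := by
  funext k
  obtain ⟨k₀, -, hk₀⟩ := exists_max_image univ (fun k => |y k|) ⟨k, mem_univ k⟩
  suffices hM : |y k₀| = 0 from abs_nonpos_iff.mp (hM ▸ hk₀ k (mem_univ k))
  by_contra hM
  have hconst :
      ∀ z, Relation.ReflTransGen (fun x y => 0 < P x y) k₀ z → |y z| = |y k₀| := by
    intro z hz
    induction hz with
    | refl => rfl
    | @tail a b _ hab ih =>
      have ha : a ∉ E := fun ha => hM (by rw [← ih, hyE a ha, abs_zero])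
      have hmax : ∀ m, |y m| ≤ |y a| := fun m => ih ▸ hk₀ m (mem_univ m)
      exact (abs_eq_of_harmonicAt_of_forall_abs_le hP hrow (hyF a ha) hmax hab).trans ih
  obtain ⟨e, he, hpath⟩ := hreach k₀
  exact hM (by rw [← hconst e hpath, hyE e he, abs_zero])

variable [DecidableEq ι]

theorem sum_mul_eq_sum_add_restrictCompl_mulVec (P : Matrix ι ι ℝ) (E : Finset ι)
    (y : ι → ℝ) (k : {k // k ∉ E}) :
    ∑ m, P k m * y m = ∑ m ∈ E, P k m * y m + (restrictCompl P E *ᵥ fun m => y m) k := by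
  rw [← sum_add_sum_compl E, sum_subtype Eᶜ (fun _ => mem_compl)]
  rfl

theorem det_one_sub_restrictCompl_ne_zero {P : Matrix ι ι ℝ} (hP : ∀ i j, 0 ≤ P i j)
    (hrow : ∀ i, ∑ j, P i j = 1) {E : Finset ι}
    (hreach : ∀ i, ∃ e ∈ E, Relation.ReflTransGen (fun x y => 0 < P x y) i e) :
    (1 - restrictCompl P E).det ≠ 0 := by
  intro hdet
  obtain ⟨v, hv, hv0⟩ := exists_mulVec_eq_zero_iff.mpr hdet
  let y : ι → ℝ := fun k => if hk : k ∈ E then 0 else v (⟨k, hk⟩ : {k // k ∉ E})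
  have hyv : (fun m : {k // k ∉ E} => y m) = v := funext fun m => dif_neg m.2
  have hyE : ∀ k ∈ E, y k = 0 := fun k hk => dif_pos hk
  have hv_fix : restrictCompl P E *ᵥ v = v := by
    rw [sub_mulVec, one_mulVec, sub_eq_zero] at hv0
    exact hv0.symm
  have hyF : ∀ k ∉ E, y k = ∑ m, P k m * y m := by
    intro k hk
    have hbdry : ∑ m ∈ E, P k m * y m = 0 := sum_eq_zero fun m hm => by rw [hyE m hm, mul_zero]
    rw [sum_mul_eq_sum_add_restrictCompl_mulVec P E y ⟨k, hk⟩, hyv, hv_fix, hbdry, zero_add]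
    exact dif_neg hk
  exact hv (by rw [← hyv, eq_zero_of_harmonic_off hP hrow hreach hyE hyF]; rfl)

theorem restrict_eq_inv_mulVec_of_hitting {P : Matrix ι ι ℝ} {E : Finset ι} {j : ι}
    (hj : j ∈ E) (hdet : (1 - restrictCompl P E).det ≠ 0) {h : ι → ℝ}
    (hE : ∀ k ∈ E, h k = if k = j then 1 else 0) (hF : ∀ k ∉ E, h k = ∑ m, P k m * h m) :
    (fun k : {k // k ∉ E} => h k) =
      (1 - restrictCompl P E)⁻¹ *ᵥ fun k : {k // k ∉ E} => P k j := by
  have hsys : (1 - restrictCompl P E) *ᵥ (fun k : {k // k ∉ E} => h k) =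
      fun k : {k // k ∉ E} => P k j := by
    funext k
    have hk := hF k k.2
    rw [sum_mul_eq_sum_add_restrictCompl_mulVec P E h k] at hk
    have hbdry : ∑ m ∈ E, P k m * h m = P k j :=
      calc ∑ m ∈ E, P k m * h m = ∑ m ∈ E, if m = j then P k m else 0 :=
            sum_congr rfl fun m hm => by rw [hE m hm, mul_ite, mul_one, mul_zero]
        _ = P k j := by rw [sum_ite_eq' E j, if_pos hj]
    rw [sub_mulVec, one_mulVec, Pi.sub_apply]
    linarith
  rw [← hsys, mulVec_mulVec, nonsing_inv_mul _ (isUnit_iff_ne_zero.mpr hdet),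
    one_mulVec]

theorem continuousAt_inv_one_sub_restrictCompl_mulVec {P : Matrix ι ι ℝ} {E : Finset ι}
    (j : ι) (hdet : (1 - restrictCompl P E).det ≠ 0) :
    ContinuousAt (fun M : Matrix ι ι ℝ =>
      (1 - restrictCompl M E)⁻¹ *ᵥ fun k : {k // k ∉ E} => M k j) P := by
  have hinv : ContinuousAt (fun M : Matrix ι ι ℝ => (1 - restrictCompl M E)⁻¹) P :=
    (continuousAt_matrix_inv _ (by rw [Ring.inverse_eq_inv']; exact tendsto_inv₀ hdet)).comp
      (continuous_one_sub_restrictCompl E).continuousAt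
  have hcol : Continuous fun M : Matrix ι ι ℝ => fun k : {k // k ∉ E} => M k j :=
    continuous_pi fun k => continuous_apply_apply _ _
  exact ((continuous_fst.matrix_mulVec continuous_snd).continuousAt).comp
    (hinv.prodMk hcol.continuousAt)

theorem tendsto_matrix_of_tendsto_offDiag {α : Type*} {l : Filter α}
    {M : α → Matrix ι ι ℝ} {P : Matrix ι ι ℝ}
    (hM : ∀ᶠ a in l, ∀ i, ∑ j, M a i j = 1) (hP : ∀ i, ∑ j, P i j = 1)
    (hoff : ∀ i j, i ≠ j → Tendsto (fun a => M a i j) l (𝓝 (P i j))) :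
    Tendsto M l (𝓝 P) := by
  refine tendsto_pi_nhds.mpr fun i => tendsto_pi_nhds.mpr fun j => ?_
  rcases ne_or_eq i j with hij | rfl
  · exact hoff i j hij
  have diag_eq :
      ∀ A : Matrix ι ι ℝ, ∑ m, A i m = 1 → A i i = 1 - ∑ m ∈ univ.erase i, A i m :=
    fun A hA => by rw [← hA, ← add_sum_erase univ (A i) (mem_univ i), add_sub_cancel_right]
  rw [diag_eq P (hP i)]
  refine Tendsto.congr' ?_ (tendsto_const_nhds.sub (tendsto_finsetSum _ fun m hm =>
    hoff i m (ne_of_mem_erase hm).symm))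
  filter_upwards [hM] with a ha
  exact (diag_eq (M a) (ha i)).symm

theorem stmt9_general (N : ℕ) (Pe : ℝ → Matrix (Fin N) (Fin N) ℝ)
    (P : Matrix (Fin N) (Fin N) ℝ)
    (hstochE : ∀ ε > (0:ℝ), (∀ i j, 0 ≤ Pe ε i j) ∧ ∀ i, ∑ j, Pe ε i j = 1)
    (hstoch : (∀ i j, 0 ≤ P i j) ∧ ∀ i, ∑ j, P i j = 1)
    (hconv : ∀ i j : Fin N, i ≠ j →
      Tendsto (fun ε => Pe ε i j) (𝓝[>] (0:ℝ)) (𝓝 (P i j)))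
    (E : Finset (Fin N))
    (hreach : ∀ i : Fin N, ∃ e ∈ E, Relation.ReflTransGen (fun x y => 0 < P x y) i e)
    (j : Fin N) (hj : j ∈ E)
    (h : ℝ → Fin N → ℝ) (h₀ : Fin N → ℝ)
    (hhE : ∀ ε > (0:ℝ), HittingDistribution (Pe ε) E j (h ε))
    (hh₀ : HittingDistribution P E j h₀) :
    ∀ i, Tendsto (fun ε => h ε i) (𝓝[>] (0:ℝ)) (𝓝 (h₀ i)) := by
  have hpos : ∀ᶠ ε in 𝓝[>] (0:ℝ), 0 < ε := self_mem_nhdsWithin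
  have hPe : Tendsto Pe (𝓝[>] 0) (𝓝 P) :=
    tendsto_matrix_of_tendsto_offDiag (hpos.mono fun ε hε => (hstochE ε hε).2) hstoch.2 hconv
  have hdet : (1 - restrictCompl P E).det ≠ 0 :=
    det_one_sub_restrictCompl_ne_zero hstoch.1 hstoch.2 hreach
  have hdetε : ∀ᶠ ε in 𝓝[>] (0:ℝ), (1 - restrictCompl (Pe ε) E).det ≠ 0 :=
    (((continuous_one_sub_restrictCompl E).matrix_det.tendsto P).comp hPe).eventually_ne hdet
  intro i
  by_cases hi : i ∈ E
  · rw [hh₀.2.1 i hi]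
    refine tendsto_const_nhds.congr' ?_
    filter_upwards [hpos] with ε hε
    exact ((hhE ε hε).2.1 i hi).symm
  have hlim := (continuousAt_inv_one_sub_restrictCompl_mulVec j hdet).tendsto.comp hPe
  rw [← restrict_eq_inv_mulVec_of_hitting hj hdet hh₀.2.1 hh₀.2.2.1] at hlim
  refine (tendsto_pi_nhds.mp hlim ⟨i, hi⟩).congr' ?_
  filter_upwards [hpos, hdetε] with ε hε hdet_ε
  exact (congr_fun (restrict_eq_inv_mulVec_of_hitting hj hdet_ε (hhE ε hε).2.1
    (hhE ε hε).2.2.1) ⟨i, hi⟩).symm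

/-- If discrete-time chains `Z^ε` converge (entrywise on off-diagonal transition
probabilities) to a chain `Z` from every state of which the nonempty set `E` is
reachable, then the hitting distributions converge: for `i ∈ S` and `j ∈ E`,
`P_i(Z^ε_{τ^ε} = j) → P_i(Z_τ = j)` as `ε ↓ 0`. -/
theorem stmt9 (N : ℕ) (Pe : ℝ → Matrix (Fin N) (Fin N) ℝ)
    (P : Matrix (Fin N) (Fin N) ℝ)
    (hstochE : ∀ ε > (0:ℝ), (∀ i j, 0 ≤ Pe ε i j) ∧ ∀ i, ∑ j, Pe ε i j = 1)
    (hstoch : (∀ i j, 0 ≤ P i j) ∧ ∀ i, ∑ j, P i j = 1)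
    (hconv : ∀ i j : Fin N, i ≠ j →
      Tendsto (fun ε => Pe ε i j) (𝓝[>] (0:ℝ)) (𝓝 (P i j)))
    (E : Finset (Fin N)) (hE : E.Nonempty)
    (hreach : ∀ i : Fin N, ∃ e ∈ E, Relation.ReflTransGen (fun x y => 0 < P x y) i e)
    (j : Fin N) (hj : j ∈ E)
    (h : ℝ → Fin N → ℝ) (h₀ : Fin N → ℝ)
    (hhE : ∀ ε > (0:ℝ), HittingDistribution (Pe ε) E j (h ε))
    (hh₀ : HittingDistribution P E j h₀) :
    ∀ i, Tendsto (fun ε => h ε i) (𝓝[>] (0:ℝ)) (𝓝 (h₀ i)) :=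
  stmt9_general N Pe P hstochE hstoch hconv E hreach j hj h h₀ hhE hh₀
end

section
/- Define the reduced transition rates Q_{kl}(ε) = ∑_{i∈S_k} ∑_{j∈S_l} μ^k(i,ε) q_{ij}(ε) for clusters S_k ≠ S_l, where μ^k(·,ε) is the stationary distribution of the chain restricted to S_k. If the original family q_{ij}(ε) is completely asymptotically regular, then for any two pairs (k,l), (m,n) with k ≠ l, m ≠ n and with S_k = {i}, S_m = {i'} singletons, the limit lim_{ε↓0} Q_{kl}(ε)/Q_{mn}(ε) exists in [0,∞]. -/
/-!
In `[0, ∞]` one has `(∑ⱼ aⱼ) / (∑ₖ bₖ) = (∑ₖ (∑ⱼ aⱼ / bₖ)⁻¹)⁻¹`, an expression built from the single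
ratios `aⱼ / bₖ` by addition and inversion, both continuous on `ℝ≥0∞`. Complete asymptotic
regularity, applied to products of length one, gives the limit of every ratio
`q_{ij}(ε) / q_{i'k}(ε)`, hence the limit of the quotient of the sums.
-/

open Filter Topology Finset
open scoped ENNReal

namespace ENNReal

theorem ofReal_sum_div_sum_eq_inv_sum_inv {ι κ : Type*} {s : Finset ι} {t : Finset κ}
    {a : ι → ℝ} {b : κ → ℝ} (ha : ∀ j ∈ s, 0 ≤ a j) (hb : ∀ k ∈ t, 0 < b k)
    (ht : t.Nonempty) :
    ENNReal.ofReal ((∑ j ∈ s, a j) / ∑ k ∈ t, b k) =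
      (∑ k ∈ t, (∑ j ∈ s, ENNReal.ofReal (a j / b k))⁻¹)⁻¹ := by
  have hsum_ne_zero : ENNReal.ofReal (∑ k ∈ t, b k) ≠ 0 := by
    simpa using Finset.sum_pos hb ht
  have hinner : ∀ k ∈ t, (∑ j ∈ s, ENNReal.ofReal (a j / b k))⁻¹ =
      ENNReal.ofReal (b k) / ENNReal.ofReal (∑ j ∈ s, a j) := by
    intro k hk
    rw [← ofReal_sum_of_nonneg fun j hj => div_nonneg (ha j hj) (hb k hk).le, ← Finset.sum_div,
      ofReal_div_of_pos (hb k hk), ENNReal.inv_div (Or.inl ofReal_ne_top)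
        (Or.inl (by simpa using hb k hk))]
  rw [Finset.sum_congr rfl hinner]
  simp only [div_eq_mul_inv _ (ENNReal.ofReal _), ← Finset.sum_mul]
  rw [← div_eq_mul_inv, ← ofReal_sum_of_nonneg fun k hk => (hb k hk).le,
    ENNReal.inv_div (Or.inl ofReal_ne_top) (Or.inr hsum_ne_zero),
    ofReal_div_of_pos (by simpa using hsum_ne_zero)]

theorem tendsto_ofReal_sum_div_sum {α ι κ : Type*} {l : Filter α} {s : Finset ι}
    {t : Finset κ} {a : α → ι → ℝ} {b : α → κ → ℝ} {L : ι → κ → ℝ≥0∞}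
    (ha : ∀ᶠ x in l, ∀ j ∈ s, 0 ≤ a x j) (hb : ∀ᶠ x in l, ∀ k ∈ t, 0 < b x k)
    (ht : t.Nonempty)
    (hL : ∀ j ∈ s, ∀ k ∈ t,
      Tendsto (fun x => ENNReal.ofReal (a x j / b x k)) l (𝓝 (L j k))) :
    Tendsto (fun x => ENNReal.ofReal ((∑ j ∈ s, a x j) / ∑ k ∈ t, b x k)) l
      (𝓝 (∑ k ∈ t, (∑ j ∈ s, L j k)⁻¹)⁻¹) := by
  have hlim : Tendsto (fun x => (∑ k ∈ t, (∑ j ∈ s, ENNReal.ofReal (a x j / b x k))⁻¹)⁻¹) l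
      (𝓝 (∑ k ∈ t, (∑ j ∈ s, L j k)⁻¹)⁻¹) :=
    tendsto_inv_iff.2 <| tendsto_finsetSum _ fun k hk =>
      tendsto_inv_iff.2 <| tendsto_finsetSum _ fun j hj => hL j hj k hk
  refine hlim.congr' ?_
  filter_upwards [ha, hb] with x hax hbx
  exact (ofReal_sum_div_sum_eq_inv_sum_inv hax hbx ht).symm

end ENNReal

theorem stmt11_general (N : ℕ) (q : ℝ → Fin N → Fin N → ℝ)
    (hpos : ∀ ε > (0:ℝ), ∀ i j, i ≠ j → 0 < q ε i j)
    (hCAR : ∀ a : ℕ, 1 ≤ a → ∀ I J K L : Fin a → Fin N,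
      (∀ m, I m ≠ J m) → (∀ m, K m ≠ L m) →
      ∃ lim : ENNReal, Tendsto
        (fun ε => ENNReal.ofReal (∏ m, q ε (I m) (J m) / q ε (K m) (L m)))
        (𝓝[>] (0:ℝ)) (𝓝 lim))
    (i i' : Fin N) (A B : Finset (Fin N)) (hB : B.Nonempty)
    (hiA : i ∉ A) (hi'B : i' ∉ B) :
    ∃ L : ENNReal, Tendsto
      (fun ε => ENNReal.ofReal ((∑ j ∈ A, q ε i j) / (∑ j' ∈ B, q ε i' j')))
      (𝓝[>] (0:ℝ)) (𝓝 L) := by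
  have hratio : ∀ j ∈ A, ∀ k ∈ B, ∃ l : ℝ≥0∞,
      Tendsto (fun ε => ENNReal.ofReal (q ε i j / q ε i' k)) (𝓝[>] (0:ℝ)) (𝓝 l) := by
    intro j hj k hk
    obtain ⟨l, hl⟩ := hCAR 1 le_rfl (fun _ => i) (fun _ => j) (fun _ => i') (fun _ => k)
      (fun _ => (ne_of_mem_of_not_mem hj hiA).symm) (fun _ => (ne_of_mem_of_not_mem hk hi'B).symm)
    exact ⟨l, by simpa using hl⟩
  choose! L hL using hratio
  have hpos_near_zero (x : Fin N) (s : Finset (Fin N)) (hx : x ∉ s) :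
      ∀ᶠ ε in 𝓝[>] (0:ℝ), ∀ y ∈ s, 0 < q ε x y := by
    filter_upwards [self_mem_nhdsWithin] with ε hε y hy
    exact hpos ε hε x y (ne_of_mem_of_not_mem hy hx).symm
  exact ⟨_, ENNReal.tendsto_ofReal_sum_div_sum
    ((hpos_near_zero i A hiA).mono fun _ h j hj => (h j hj).le) (hpos_near_zero i' B hi'B) hB hL⟩

/-- Reduced transition rates out of singleton clusters. If the family `q` is completely
asymptotically regular, then for singleton clusters `S_k = {i}`, `S_m = {i'}` and
clusters `S_l = A`, `S_n = B` (with `i ∉ A`, `i' ∉ B`), the ratio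
`Q_{kl}(ε)/Q_{mn}(ε) = (∑_{j∈A} q_{ij}(ε))/(∑_{j'∈B} q_{i'j'}(ε))` converges in `[0,∞]`
as `ε ↓ 0`. -/
theorem stmt11 (N : ℕ) (q : ℝ → Fin N → Fin N → ℝ)
    (hpos : ∀ ε > (0:ℝ), ∀ i j, i ≠ j → 0 < q ε i j)
    (hCAR : ∀ a : ℕ, 1 ≤ a → ∀ I J K L : Fin a → Fin N,
      (∀ m, I m ≠ J m) → (∀ m, K m ≠ L m) →
      ∃ lim : ENNReal, Tendsto
        (fun ε => ENNReal.ofReal (∏ m, q ε (I m) (J m) / q ε (K m) (L m)))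
        (𝓝[>] (0:ℝ)) (𝓝 lim))
    (i i' : Fin N) (A B : Finset (Fin N)) (hA : A.Nonempty) (hB : B.Nonempty)
    (hiA : i ∉ A) (hi'B : i' ∉ B) :
    ∃ L : ENNReal, Tendsto
      (fun ε => ENNReal.ofReal ((∑ j ∈ A, q ε i j) / (∑ j' ∈ B, q ε i' j')))
      (𝓝[>] (0:ℝ)) (𝓝 L) :=
  stmt11_general N q hpos hCAR i i' A B hB hiA hi'B
end

section
/- Let X^ε be an asymptotically regular continuous-time Markov chain on finite S (N ≥ 2) with irreducible skeleton chain Z, let E ⊆ S be nonempty, σ = inf{t : X^ε_t ∈ E}, τ = min{n : Z_n ∈ E}. Then for each i ∈ S and j ∈ E, lim_{ε↓0} P_i(X^ε_σ = j) = P_i(Z_τ = j). -/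
open Filter Topology Finset

/-- The embedded jump chain of the continuous-time chain with rates `q`. -/
noncomputable def jumpChain {N : ℕ} (q : Fin N → Fin N → ℝ) :
    Matrix (Fin N) (Fin N) ℝ :=
  Matrix.of fun i j =>
    if i = j then 0 else q i j / ∑ j' ∈ Finset.univ.erase i, q i j'

/-! Off `E` a hitting distribution is harmonic for its transition matrix `Q`, so it solves the
linear system `hittingMatrix E Q *ᵥ u = Pi.single j 1`, whose matrix has the rows of the identity
on `E` and those of `1 - Q` elsewhere. For the skeleton matrix `P` this matrix is invertible by a
maximum principle: a vector in its kernel would attain its maximal modulus at a state from which,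
by irreducibility, `j ∈ E` is reachable, where it vanishes. The jump-chain matrices converge to
`P`, and the solution depends continuously on `Q` wherever the matrix is invertible, so the
hitting distributions converge. -/

open Matrix

theorem abs_eq_of_le_abs_sum_mul {ι : Type*} [Fintype ι] {w v : ι → ℝ} {c : ℝ}
    (hw : ∀ m, 0 ≤ w m) (hw₁ : ∑ m, w m ≤ 1) (hv : ∀ m, |v m| ≤ c)
    (hc : c ≤ |∑ m, w m * v m|) {m : ι} (hm : 0 < w m) : |v m| = c := by
  refine (hv m).antisymm (not_lt.1 fun hlt => ?_)
  have hc₀ : 0 ≤ c := (abs_nonneg _).trans (hv m)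
  refine lt_irrefl c <| calc
    c ≤ |∑ m, w m * v m| := hc
    _ ≤ ∑ m, w m * |v m| := by
      simpa only [abs_mul, abs_of_nonneg (hw _)] using
        abs_sum_le_sum_abs (fun m => w m * v m) univ
    _ < ∑ m, w m * c :=
      sum_lt_sum (fun m _ => mul_le_mul_of_nonneg_left (hv m) (hw m))
        ⟨m, mem_univ m, mul_lt_mul_of_pos_left hlt hm⟩
    _ = (∑ m, w m) * c := (sum_mul ..).symm
    _ ≤ c := mul_le_of_le_one_left hc₀ hw₁

section HittingMatrix

variable {ι : Type*} [DecidableEq ι]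

def hittingMatrix (E : Finset ι) (Q : Matrix ι ι ℝ) : Matrix ι ι ℝ :=
  Matrix.of fun k => if k ∈ E then (1 : Matrix ι ι ℝ) k else (1 - Q) k

theorem continuous_hittingMatrix {E : Finset ι} : Continuous (hittingMatrix E) :=
  continuous_matrix fun k m => by
    by_cases hk : k ∈ E <;> simp only [hittingMatrix, of_apply, hk, if_true, if_false] <;> fun_prop

variable [Fintype ι]

theorem mem_of_pow_apply_pos {Q : Matrix ι ι ℝ} (hQ : ∀ k m, 0 ≤ Q k m) {S : Set ι}
    (hS : ∀ k ∈ S, ∀ m, 0 < Q k m → m ∈ S) {n : ℕ} {a b : ι} (ha : a ∈ S)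
    (hab : 0 < (Q ^ n) a b) : b ∈ S := by
  induction n generalizing a with
  | zero =>
    obtain rfl : a = b := by
      by_contra hne
      simp [one_apply_ne hne] at hab
    exact ha
  | succ n ih =>
    rw [pow_succ', mul_apply] at hab
    obtain ⟨m, -, hm⟩ := exists_lt_of_sum_lt (f := fun _ => (0 : ℝ)) (by simpa using hab)
    obtain ⟨hQam, hm⟩ | ⟨hQam, -⟩ := pos_and_pos_or_neg_and_neg_of_mul_pos hm
    · exact ih (hS a ha m hQam) hm
    · exact absurd (hQ a m) hQam.not_ge

noncomputable def hittingSolution (E : Finset ι) (j : ι) (Q : Matrix ι ι ℝ) : ι → ℝ :=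
  (hittingMatrix E Q)⁻¹ *ᵥ Pi.single j 1

variable {E : Finset ι} {j : ι} {Q : Matrix ι ι ℝ}

theorem hittingMatrix_mulVec_apply (v : ι → ℝ) (k : ι) :
    (hittingMatrix E Q *ᵥ v) k = if k ∈ E then v k else v k - (Q *ᵥ v) k := by
  have : (hittingMatrix E Q *ᵥ v) k = if k ∈ E then (1 *ᵥ v) k else ((1 - Q) *ᵥ v) k := by
    unfold hittingMatrix; split_ifs with hk <;> simp only [mulVec, of_apply, hk, if_true, if_false]
  rw [this, sub_mulVec, one_mulVec]
  rfl

theorem hittingMatrix_mulVec_eq_single (hj : j ∈ E) {h : ι → ℝ}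
    (hE : ∀ k ∈ E, h k = if k = j then 1 else 0) (hQ : ∀ k ∉ E, h k = ∑ m, Q k m * h m) :
    hittingMatrix E Q *ᵥ h = Pi.single j 1 := by
  ext k
  rw [hittingMatrix_mulVec_apply, Pi.single_apply]
  split_ifs with hk hkj hkj
  · rw [hE k hk, if_pos hkj]
  · rw [hE k hk, if_neg hkj]
  · exact absurd (hkj ▸ hj) hk
  · rw [sub_eq_zero]
    exact hQ k hk

theorem isUnit_det_hittingMatrix (hj : j ∈ E) (hQ : ∀ k m, 0 ≤ Q k m)
    (hrow : ∀ k, ∑ m, Q k m ≤ 1) (hreach : ∀ k, ∃ n, 0 < (Q ^ n) k j) :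
    IsUnit (hittingMatrix E Q).det := by
  rw [isUnit_iff_ne_zero, Ne, ← exists_mulVec_eq_zero_iff]
  rintro ⟨v, hv₀, hv⟩
  have hvE : ∀ k ∈ E, v k = 0 := fun k hk => by
    simpa [hittingMatrix_mulVec_apply, hk] using congrFun hv k
  have hvQ : ∀ k ∉ E, v k = (Q *ᵥ v) k := fun k hk => by
    simpa [hittingMatrix_mulVec_apply, hk, sub_eq_zero] using congrFun hv k
  obtain ⟨a, -, ha⟩ := exists_max_image univ (fun k => |v k|) ⟨j, mem_univ j⟩
  have hva : 0 < |v a| := by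
    obtain ⟨b, hb⟩ := Function.ne_iff.1 hv₀
    exact (abs_pos.2 hb).trans_le (ha b (mem_univ b))
  -- A state where `|v|` is maximal lies off `E`, where `v = Q *ᵥ v`, so its successors are
  -- maximal too; but `j ∈ E` is reachable.
  have hS : ∀ k ∈ {k | |v k| = |v a|}, ∀ m, 0 < Q k m → m ∈ {k | |v k| = |v a|} := by
    intro k hk m hm
    have hkE : k ∉ E := fun hkE => by
      rw [Set.mem_ofPred_eq, hvE k hkE, abs_zero] at hk
      exact hva.ne hk
    exact abs_eq_of_le_abs_sum_mul (hQ k) (hrow k) (fun b => ha b (mem_univ b))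
      (by rw [← hk, hvQ k hkE]; rfl) hm
  obtain ⟨n, hn⟩ := hreach a
  have hj' : |v j| = |v a| := mem_of_pow_apply_pos hQ hS rfl hn
  rw [hvE j hj, abs_zero] at hj'
  exact hva.ne hj'

theorem continuousAt_hittingSolution (hdet : IsUnit (hittingMatrix E Q).det) :
    ContinuousAt (hittingSolution E j) Q := by
  have hinv : ContinuousAt Inv.inv (hittingMatrix E Q) :=
    continuousAt_matrix_inv _ (NormedRing.inverse_continuousAt hdet.unit)
  exact (continuous_id.matrix_mulVec continuous_const).continuousAt.comp
    (hinv.comp continuous_hittingMatrix.continuousAt)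

end HittingMatrix

theorem HittingDistribution.eq_hittingSolution {N : ℕ} {Q : Matrix (Fin N) (Fin N) ℝ}
    {E : Finset (Fin N)} {j : Fin N} {h : Fin N → ℝ} (hh : HittingDistribution Q E j h)
    (hj : j ∈ E) (hdet : IsUnit (hittingMatrix E Q).det) : h = hittingSolution E j Q := by
  rw [hittingSolution, ← hittingMatrix_mulVec_eq_single hj hh.2.1 hh.2.2.1, mulVec_mulVec,
    nonsing_inv_mul _ hdet, one_mulVec]

section JumpChain

variable {N : ℕ}

theorem jumpChain_nonneg {q : Fin N → Fin N → ℝ} (hq : ∀ i m, i ≠ m → 0 ≤ q i m)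
    (i m : Fin N) : 0 ≤ jumpChain q i m := by
  simp only [jumpChain, of_apply]
  split_ifs with him
  · exact le_rfl
  · exact div_nonneg (hq i m him) (sum_nonneg fun m hm => hq i m (ne_of_mem_erase hm).symm)

theorem sum_jumpChain_le_one {q : Fin N → Fin N → ℝ} (i : Fin N) :
    ∑ m, jumpChain q i m ≤ 1 := by
  have hoff : ∀ m ∈ univ.erase i, jumpChain q i m = q i m / ∑ m' ∈ univ.erase i, q i m' :=
    fun m hm => if_neg (ne_of_mem_erase hm).symm
  rw [← add_sum_erase _ _ (mem_univ i), sum_congr rfl hoff, ← sum_div]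
  simpa [jumpChain] using div_self_le_one (∑ m' ∈ univ.erase i, q i m')

theorem tendsto_jumpChain {α : Type*} {l : Filter α} {q : α → Fin N → Fin N → ℝ}
    {P : Matrix (Fin N) (Fin N) ℝ} (hPdiag : ∀ i, P i i = 0)
    (hP : ∀ i m, i ≠ m → Tendsto (fun x => q x i m / ∑ m' ∈ univ.erase i, q x i m') l
      (𝓝 (P i m))) :
    Tendsto (fun x => jumpChain (q x)) l (𝓝 P) := by
  refine tendsto_pi_nhds.2 fun i => tendsto_pi_nhds.2 fun m => ?_
  by_cases him : i = m
  · subst him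
    simpa [jumpChain, hPdiag] using tendsto_const_nhds
  · simpa only [jumpChain, of_apply, if_neg him] using hP i m him

end JumpChain

theorem stmt14_general (N : ℕ) (q : ℝ → Fin N → Fin N → ℝ)
    (hpos : ∀ ε > (0:ℝ), ∀ i j, i ≠ j → 0 < q ε i j)
    (P : Matrix (Fin N) (Fin N) ℝ) (hPdiag : ∀ i, P i i = 0)
    (hP : ∀ i j : Fin N, i ≠ j → Tendsto
      (fun ε => q ε i j / ∑ j' ∈ Finset.univ.erase i, q ε i j')
      (𝓝[>] (0:ℝ)) (𝓝 (P i j)))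
    (hirr : ∀ i j : Fin N, ∃ n : ℕ, 0 < (P ^ n) i j)
    (E : Finset (Fin N)) (j : Fin N) (hj : j ∈ E)
    (h : ℝ → Fin N → ℝ) (h₀ : Fin N → ℝ)
    -- `h ε i = P_i(X^ε_σ = j)`, the hitting distribution of the jump chain of `X^ε`:
    (hhE : ∀ ε > (0:ℝ), HittingDistribution (jumpChain (q ε)) E j (h ε))
    -- `h₀ i = P_i(Z_τ = j)` for the skeleton chain `Z`:
    (hh₀ : HittingDistribution P E j h₀) :
    ∀ i, Tendsto (fun ε => h ε i) (𝓝[>] (0:ℝ)) (𝓝 (h₀ i)) := by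
  have hQ := tendsto_jumpChain hPdiag hP
  have hPnn : ∀ i m, 0 ≤ P i m := fun i m =>
    ge_of_tendsto (((continuous_apply_apply i m).tendsto P).comp hQ) <|
      eventually_mem_nhdsWithin.mono fun ε hε =>
        jumpChain_nonneg (fun i m him => (hpos ε hε i m him).le) i m
  have hProw : ∀ i, ∑ m, P i m ≤ 1 := fun i =>
    le_of_tendsto' (((continuous_finsetSum _ fun m _ =>
      continuous_apply_apply i m).tendsto P).comp hQ) fun _ => sum_jumpChain_le_one i
  have hdet : IsUnit (hittingMatrix E P).det :=
    isUnit_det_hittingMatrix hj hPnn hProw fun k => hirr k j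
  have hdetε : ∀ᶠ ε in 𝓝[>] (0:ℝ), IsUnit (hittingMatrix E (jumpChain (q ε))).det :=
    ((((continuous_hittingMatrix.matrix_det).tendsto P).comp hQ).eventually_ne
      (isUnit_iff_ne_zero.1 hdet)).mono fun _ => isUnit_iff_ne_zero.2
  have hlim : Tendsto (fun ε => hittingSolution E j (jumpChain (q ε))) (𝓝[>] 0) (𝓝 h₀) := by
    rw [hh₀.eq_hittingSolution hj hdet]
    exact (continuousAt_hittingSolution hdet).tendsto.comp hQ
  have heq : ∀ᶠ ε in 𝓝[>] (0:ℝ), hittingSolution E j (jumpChain (q ε)) = h ε :=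
    (hdetε.and eventually_mem_nhdsWithin).mono fun ε ⟨hd, hε⟩ =>
      ((hhE ε hε).eq_hittingSolution hj hd).symm
  exact tendsto_pi_nhds.1 (hlim.congr' heq)

/-- For an asymptotically regular family `X^ε` with irreducible skeleton chain `Z`, a
nonempty set `E` and `j ∈ E`, the distribution at the first hitting time `σ` of `E`
(i.e., the hitting distribution of the embedded jump chain) converges:
`P_i(X^ε_σ = j) → P_i(Z_τ = j)` as `ε ↓ 0`. -/
theorem stmt14 (N : ℕ) (hN : 2 ≤ N) (q : ℝ → Fin N → Fin N → ℝ)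
    (hpos : ∀ ε > (0:ℝ), ∀ i j, i ≠ j → 0 < q ε i j)
    (hAR : ∀ i j k l : Fin N, i ≠ j → k ≠ l → ∃ L : ENNReal,
      Tendsto (fun ε => ENNReal.ofReal (q ε i j / q ε k l)) (𝓝[>] (0:ℝ)) (𝓝 L))
    (P : Matrix (Fin N) (Fin N) ℝ) (hPdiag : ∀ i, P i i = 0)
    (hP : ∀ i j : Fin N, i ≠ j → Tendsto
      (fun ε => q ε i j / ∑ j' ∈ Finset.univ.erase i, q ε i j')
      (𝓝[>] (0:ℝ)) (𝓝 (P i j)))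
    (hirr : ∀ i j : Fin N, ∃ n : ℕ, 0 < (P ^ n) i j)
    (E : Finset (Fin N)) (hE : E.Nonempty) (j : Fin N) (hj : j ∈ E)
    (h : ℝ → Fin N → ℝ) (h₀ : Fin N → ℝ)
    -- `h ε i = P_i(X^ε_σ = j)`, the hitting distribution of the jump chain of `X^ε`:
    (hhE : ∀ ε > (0:ℝ), HittingDistribution (jumpChain (q ε)) E j (h ε))
    -- `h₀ i = P_i(Z_τ = j)` for the skeleton chain `Z`:
    (hh₀ : HittingDistribution P E j h₀) :
    ∀ i, Tendsto (fun ε => h ε i) (𝓝[>] (0:ℝ)) (𝓝 (h₀ i)) :=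
  stmt14_general N q hpos P hPdiag hP hirr E j hj h h₀ hhE hh₀
end
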